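/- arXiv:1708.02152 — 7 statements merged into one kernel-verified Lean document; each statement's English description precedes it below -/
import Mathlib

section
/- Let p be a prime, θ, q ∈ ℚ_p with 0 < |θ−1|_p < |q|_p < 1, and f(x) = ((θx + q − 1)/(x + θ + q − 2))³. Then the derivative of f at x = 1 has p-adic absolute value |f'(1)|_p = |3|_p · |θ−1|_p / |q|_p; in particular, if p ≠ 3 then |f'(1)|_p = |θ−1|_p/|q|_p < 1, so 1 is an attracting fixed point. -/
/-! At the fixed point `1` the inner Möbius map has derivative `(θ - 1)/(θ + q - 1)`, so the
chain rule gives `f'(1) = 3 (θ - 1)/(θ + q - 1)`. Since `‖θ - 1‖ < ‖q‖`, the ultrametric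
inequality is an equality for `θ + q - 1 = q + (θ - 1)`, whose norm is therefore `‖q‖`; and
`‖3‖ = 1` as soon as `p ≠ 3`. -/

section PottsBethe

variable {𝕜 : Type*} [NontriviallyNormedField 𝕜]

theorem hasDerivAt_affine_div_add (a b d x : 𝕜) (h : x + d ≠ 0) :
    HasDerivAt (fun x => (a * x + b) / (x + d)) ((a * d - b) / (x + d) ^ 2) x := by
  have hnum : HasDerivAt (fun x => a * x + b) a x := by
    simpa using ((hasDerivAt_id x).const_mul a).add_const b
  exact (hnum.div ((hasDerivAt_id x).add_const d) h).congr_deriv (by simp only [id]; ring)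

def pottsBethe (θ q x : 𝕜) : 𝕜 := ((θ * x + q - 1) / (x + θ + q - 2)) ^ 3

theorem hasDerivAt_pottsBethe_one {θ q : 𝕜} (h : θ + q - 1 ≠ 0) :
    HasDerivAt (pottsBethe θ q) (3 * (θ - 1) / (θ + q - 1)) 1 := by
  have hden : (1 : 𝕜) + (θ + q - 2) = θ + q - 1 := by ring
  have hfixed : (θ * 1 + (q - 1)) / (1 + (θ + q - 2)) = 1 := by
    rw [hden, div_eq_one_iff_eq h]
    ring
  have hmobius := hasDerivAt_affine_div_add θ (q - 1) (θ + q - 2) 1 (hden ▸ h)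
  have hpow := hmobius.fun_pow 3
  rw [hfixed, hden] at hpow
  have hfun : pottsBethe θ q = fun x => ((θ * x + (q - 1)) / (x + (θ + q - 2))) ^ 3 := by
    funext x
    simp only [pottsBethe]
    ring
  rw [hfun]
  refine hpow.congr_deriv ?_
  field_simp
  ring

end PottsBethe

theorem IsUltrametricDist.norm_add_eq_left_of_norm_lt {E : Type*} [SeminormedAddCommGroup E]
    [IsUltrametricDist E] {x y : E} (h : ‖y‖ < ‖x‖) : ‖x + y‖ = ‖x‖ := by
  rw [norm_add_eq_max_of_norm_ne_norm h.ne', max_eq_left h.le]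

theorem Padic.norm_natCast_eq_one_of_prime_ne {p ℓ : ℕ} [Fact p.Prime] (hℓ : ℓ.Prime)
    (h : p ≠ ℓ) : ‖(ℓ : ℚ_[p])‖ = 1 :=
  Padic.norm_natCast_eq_one_iff.mpr ((Nat.coprime_primes Fact.out hℓ).mpr h)

theorem pottsBethe_deriv_at_one_general (p : ℕ) [Fact p.Prime]
    (θ q : ℚ_[p]) (h2 : ‖θ - 1‖ < ‖q‖) :
    ‖deriv (fun x : ℚ_[p] => ((θ * x + q - 1) / (x + θ + q - 2)) ^ 3) 1‖
      = ‖(3 : ℚ_[p])‖ * ‖θ - 1‖ / ‖q‖ ∧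
    (p ≠ 3 →
      ‖deriv (fun x : ℚ_[p] => ((θ * x + q - 1) / (x + θ + q - 2)) ^ 3) 1‖
        = ‖θ - 1‖ / ‖q‖ ∧
      ‖deriv (fun x : ℚ_[p] => ((θ * x + q - 1) / (x + θ + q - 2)) ^ 3) 1‖ < 1) := by
  have hq : 0 < ‖q‖ := (norm_nonneg _).trans_lt h2
  have hD : ‖θ + q - 1‖ = ‖q‖ := by
    rw [show θ + q - 1 = q + (θ - 1) by ring]
    exact IsUltrametricDist.norm_add_eq_left_of_norm_lt h2
  have hderiv := (hasDerivAt_pottsBethe_one (norm_pos_iff.mp (hD ▸ hq))).deriv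
  have hnorm : ‖deriv (pottsBethe θ q) 1‖ = ‖(3 : ℚ_[p])‖ * ‖θ - 1‖ / ‖q‖ := by
    rw [hderiv, norm_div, norm_mul, hD]
  refine ⟨hnorm, fun hp => ?_⟩
  have hthree : ‖(3 : ℚ_[p])‖ = 1 := by
    simpa using Padic.norm_natCast_eq_one_of_prime_ne Nat.prime_three hp
  rw [hthree, one_mul] at hnorm
  exact ⟨hnorm, hnorm ▸ (div_lt_one hq).mpr h2⟩

/-- The norm of the derivative of the Potts–Bethe mapping at the fixed point `1`
equals `‖3‖ · ‖θ-1‖ / ‖q‖`; in particular for `p ≠ 3` it equals `‖θ-1‖/‖q‖ < 1`,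
so `1` is an attracting fixed point. -/
theorem pottsBethe_deriv_at_one (p : ℕ) [Fact p.Prime]
    (θ q : ℚ_[p]) (h1 : 0 < ‖θ - 1‖) (h2 : ‖θ - 1‖ < ‖q‖) (h3 : ‖q‖ < 1) :
    ‖deriv (fun x : ℚ_[p] => ((θ * x + q - 1) / (x + θ + q - 2)) ^ 3) 1‖
      = ‖(3 : ℚ_[p])‖ * ‖θ - 1‖ / ‖q‖ ∧
    (p ≠ 3 →
      ‖deriv (fun x : ℚ_[p] => ((θ * x + q - 1) / (x + θ + q - 2)) ^ 3) 1‖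
        = ‖θ - 1‖ / ‖q‖ ∧
      ‖deriv (fun x : ℚ_[p] => ((θ * x + q - 1) / (x + θ + q - 2)) ^ 3) 1‖ < 1) :=
  pottsBethe_deriv_at_one_general p θ q h2
end

section
/- Let p be a prime, θ, q ∈ ℚ_p with 0 < |θ−1|_p < |q|_p < 1, and f(x) = ((θx+q−1)/(x+θ+q−2))³. For every x ∈ ℚ_p with |x−1|_p > |q|_p, one has |f(x) − 1|_p ≤ |θ−1|_p < |q|_p. -/
/-- For `x` with `‖x - 1‖ > ‖q‖`, one has `‖f x - 1‖ ≤ ‖θ-1‖ < ‖q‖` for the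
Potts–Bethe mapping `f`. -/
theorem pottsBethe_on_A1 (p : ℕ) [Fact p.Prime]
    (θ q : ℚ_[p]) (h1 : 0 < ‖θ - 1‖) (h2 : ‖θ - 1‖ < ‖q‖) (h3 : ‖q‖ < 1)
    (x : ℚ_[p]) (hx : ‖q‖ < ‖x - 1‖) :
    ‖((θ * x + q - 1) / (x + θ + q - 2)) ^ 3 - 1‖ ≤ ‖θ - 1‖ ∧ ‖θ - 1‖ < ‖q‖ := by
  refine ⟨?_, h2⟩
  have hx1 : 0 < ‖x - 1‖ := lt_trans (lt_trans h1 h2) hx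
  -- ‖(θ-1)*x‖ < ‖x-1‖
  have hθx : ‖(θ - 1) * x‖ < ‖x - 1‖ := by
    rw [norm_mul]
    by_cases h : ‖x‖ ≤ 1
    · calc ‖θ - 1‖ * ‖x‖ ≤ ‖θ - 1‖ * 1 := by
            exact mul_le_mul_of_nonneg_left h (norm_nonneg _)
      _ = ‖θ - 1‖ := mul_one _
      _ < ‖x - 1‖ := lt_trans h2 hx
    · push_neg at h
      have hxe : ‖x - 1‖ = ‖x‖ := by
        have : x - 1 = x + (-1) := by ring
        rw [this, Padic.add_eq_max_of_ne]
        · simp [le_of_lt h]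
        · simp only [norm_neg, norm_one]
          exact ne_of_gt h
      rw [hxe]
      nlinarith [norm_nonneg x, lt_trans h2 h3]
  -- ‖(θ-1)*x + q‖ < ‖x-1‖
  have hAq : ‖(θ - 1) * x + q‖ < ‖x - 1‖ :=
    lt_of_le_of_lt (Padic.nonarchimedean _ _) (max_lt hθx hx)
  have hBq : ‖(θ - 1) + q‖ < ‖x - 1‖ :=
    lt_of_le_of_lt (Padic.nonarchimedean _ _)
      (max_lt (lt_trans h2 hx) hx)
  -- norms of numerator and denominator
  have hN : ‖θ * x + q - 1‖ = ‖x - 1‖ := by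
    have e : θ * x + q - 1 = (x - 1) + ((θ - 1) * x + q) := by ring
    rw [e, Padic.add_eq_max_of_ne (ne_of_gt hAq), max_eq_left (le_of_lt hAq)]
  have hD : ‖x + θ + q - 2‖ = ‖x - 1‖ := by
    have e : x + θ + q - 2 = (x - 1) + ((θ - 1) + q) := by ring
    rw [e, Padic.add_eq_max_of_ne (ne_of_gt hBq), max_eq_left (le_of_lt hBq)]
  set N := θ * x + q - 1 with hNdef
  set D := x + θ + q - 2 with hDdef
  have hD0 : D ≠ 0 := by
    intro h
    rw [h, norm_zero] at hD
    exact absurd hD.symm (ne_of_gt hx1)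
  have key : (N / D) ^ 3 - 1 = ((θ - 1) * (x - 1) * (N ^ 2 + N * D + D ^ 2)) / D ^ 3 := by
    field_simp
    ring
  rw [key, norm_div, norm_mul, norm_mul, norm_pow, hD]
  have hg : ‖N ^ 2 + N * D + D ^ 2‖ ≤ ‖x - 1‖ ^ 2 := by
    refine le_trans (Padic.nonarchimedean _ _) (max_le (le_trans (Padic.nonarchimedean _ _) (max_le ?_ ?_)) ?_)
    · rw [pow_two, norm_mul, hN]; rw [pow_two]
    · rw [norm_mul, hN, hD, pow_two]
    · rw [pow_two, norm_mul, hD, pow_two]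
  rw [div_le_iff₀ (by positivity)]
  calc ‖θ - 1‖ * ‖x - 1‖ * ‖N ^ 2 + N * D + D ^ 2‖
      ≤ ‖θ - 1‖ * ‖x - 1‖ * ‖x - 1‖ ^ 2 := by
        exact mul_le_mul_of_nonneg_left hg (by positivity)
    _ = ‖θ - 1‖ * ‖x - 1‖ ^ 3 := by ring
end

section
/- Let θ, q ∈ ℚ_3 with 0 < |θ−1|_3 < |q|_3 < 1 and |q|_3 = 1/3. Then the cubic y³ − (1+θ+θ²)y² − (2θ+1)(1−θ−q)y − (1−θ−q)² = 0 has no root in ℚ_3. -/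
/-!
Write the cubic as `y³ - a y² - b y - c`. The hypotheses give `‖a‖ ≤ 1/3`, `‖b‖ ≤ 1/9` and
`‖c‖ = 1/9`: indeed `1 + θ + θ² = 3θ + (θ - 1)²`, `2θ + 1 = 3θ - (θ - 1)` and
`‖1 - θ - q‖ = ‖q‖ = 1/3`. By the Newton polygon a root would have norm `3^(-2/3)`, which is
not a value of the norm on `ℚ_3`. Concretely, if `‖y‖ ≥ 1` the term `y³` strictly dominates
the others, and if `‖y‖ < 1`, hence `‖y‖ ≤ 1/3`, the constant term does.
-/

open IsUltrametricDist

theorem IsUltrametricDist.norm_sub_le_max {E : Type*} [SeminormedAddGroup E] [IsUltrametricDist E]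
    (x y : E) : ‖x - y‖ ≤ max ‖x‖ ‖y‖ := by
  simpa [sub_eq_add_neg] using norm_add_le_max x (-y)

section Ultrametric

variable {K : Type*} [NormedField K] [IsUltrametricDist K] {a b c y : K}

theorem cubic_ne_zero_of_norm_root_le {r : ℝ} (hr0 : 0 < r) (hr1 : r < 1) (ha : ‖a‖ ≤ r)
    (hb : ‖b‖ ≤ r ^ 2) (hc : ‖c‖ = r ^ 2) (hy : ‖y‖ ≤ r) :
    y ^ 3 - a * y ^ 2 - b * y - c ≠ 0 := by
  intro h
  have hr3 : r ^ 3 < r ^ 2 := pow_lt_pow_right_of_lt_one₀ hr0 hr1 (by norm_num)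
  have hcube : ‖y ^ 3‖ < r ^ 2 := by
    rw [norm_pow]; exact (pow_le_pow_left₀ (norm_nonneg _) hy 3).trans_lt hr3
  have hquad : ‖a * y ^ 2‖ < r ^ 2 := by
    rw [norm_mul, norm_pow]
    calc ‖a‖ * ‖y‖ ^ 2 ≤ r * r ^ 2 := by gcongr
      _ < r ^ 2 := by nlinarith
  have hlin : ‖b * y‖ < r ^ 2 := by
    rw [norm_mul]
    calc ‖b‖ * ‖y‖ ≤ r ^ 2 * r := by gcongr
      _ < r ^ 2 := by nlinarith
  have hc' : c = y ^ 3 - a * y ^ 2 - b * y := by linear_combination -h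
  have : ‖c‖ < r ^ 2 := hc' ▸ (norm_sub_le_max _ _).trans_lt
    (max_lt ((norm_sub_le_max _ _).trans_lt (max_lt hcube hquad)) hlin)
  exact this.ne hc

theorem cubic_ne_zero_of_one_le_norm_root (ha : ‖a‖ < 1) (hb : ‖b‖ < 1) (hc : ‖c‖ < 1)
    (hy : 1 ≤ ‖y‖) : y ^ 3 - a * y ^ 2 - b * y - c ≠ 0 := by
  intro h
  have hquad : ‖a * y ^ 2‖ < ‖y‖ ^ 3 := by
    rw [norm_mul, norm_pow]
    calc ‖a‖ * ‖y‖ ^ 2 < 1 * ‖y‖ ^ 2 := by gcongr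
      _ ≤ ‖y‖ * ‖y‖ ^ 2 := by gcongr
      _ = ‖y‖ ^ 3 := by ring
  have hlin : ‖b * y‖ < ‖y‖ ^ 3 := by
    rw [norm_mul]
    calc ‖b‖ * ‖y‖ < 1 * ‖y‖ := by gcongr
      _ ≤ ‖y‖ ^ 2 * ‖y‖ := by gcongr; exact one_le_pow₀ hy
      _ = ‖y‖ ^ 3 := by ring
  have hconst : ‖c‖ < ‖y‖ ^ 3 := hc.trans_le (one_le_pow₀ hy)
  have hy3 : y ^ 3 = a * y ^ 2 + b * y + c := by linear_combination h
  have : ‖y ^ 3‖ < ‖y‖ ^ 3 := hy3 ▸ (norm_add_le_max _ _).trans_lt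
    (max_lt ((norm_add_le_max _ _).trans_lt (max_lt hquad hlin)) hconst)
  exact this.ne (norm_pow y 3)

end Ultrametric

namespace Padic

section

variable {p : ℕ} [Fact p.Prime]

theorem norm_le_inv_of_norm_lt_one {x : ℚ_[p]} (hx : ‖x‖ < 1) : ‖x‖ ≤ (p : ℝ)⁻¹ := by
  simpa using (norm_lt_pow_iff_norm_le_pow_sub_one x 0).mp (by simpa using hx)

theorem cubic_ne_zero_of_norm_coeff_le (a b c y : ℚ_[p]) (ha : ‖a‖ ≤ (p : ℝ)⁻¹)
    (hb : ‖b‖ ≤ (p : ℝ)⁻¹ ^ 2) (hc : ‖c‖ = (p : ℝ)⁻¹ ^ 2) :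
    y ^ 3 - a * y ^ 2 - b * y - c ≠ 0 := by
  have hr0 : 0 < (p : ℝ)⁻¹ := inv_pos.mpr (mod_cast (Fact.out : p.Prime).pos)
  have hr1 : (p : ℝ)⁻¹ < 1 := inv_lt_one_of_one_lt₀ (mod_cast (Fact.out : p.Prime).one_lt)
  have hr2 : (p : ℝ)⁻¹ ^ 2 < 1 := pow_lt_one₀ hr0.le hr1 (by norm_num)
  rcases lt_or_ge ‖y‖ 1 with hy | hy
  · exact cubic_ne_zero_of_norm_root_le hr0 hr1 ha hb hc (norm_le_inv_of_norm_lt_one hy)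
  · exact cubic_ne_zero_of_one_le_norm_root (ha.trans_lt hr1) (hb.trans_lt hr2) (hc ▸ hr2) hy

end

section

variable {θ : ℚ_[3]}

theorem norm_three : ‖(3 : ℚ_[3])‖ = 3⁻¹ := by
  simpa using norm_p (p := 3)

theorem norm_three_mul_le_of_norm_sub_one_le (hθ : ‖θ - 1‖ ≤ 3⁻¹) : ‖3 * θ‖ ≤ 3⁻¹ := by
  have hθ1 : ‖θ‖ ≤ 1 := by
    simpa using (norm_add_le_max (θ - 1) 1).trans (max_le (hθ.trans (by norm_num)) norm_one.le)
  rw [norm_mul, norm_three]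
  exact mul_le_of_le_one_right (by norm_num) hθ1

theorem norm_one_add_self_add_sq_le (hθ : ‖θ - 1‖ ≤ 3⁻¹) : ‖1 + θ + θ ^ 2‖ ≤ 3⁻¹ := by
  have hsq : ‖(θ - 1) ^ 2‖ ≤ 3⁻¹ := by
    rw [norm_pow]
    nlinarith [norm_nonneg (θ - 1)]
  rw [show 1 + θ + θ ^ 2 = 3 * θ + (θ - 1) ^ 2 by ring]
  exact (norm_add_le_max _ _).trans (max_le (norm_three_mul_le_of_norm_sub_one_le hθ) hsq)

theorem norm_two_mul_add_one_le (hθ : ‖θ - 1‖ ≤ 3⁻¹) : ‖2 * θ + 1‖ ≤ 3⁻¹ := by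
  rw [show 2 * θ + 1 = 3 * θ - (θ - 1) by ring]
  exact (norm_sub_le_max _ _).trans (max_le (norm_three_mul_le_of_norm_sub_one_le hθ) hθ)

end

end Padic

theorem cubic_no_root_in_Q3_general (θ q : ℚ_[3])
    (h2 : ‖θ - 1‖ < ‖q‖) (hq : ‖q‖ = 1 / 3) :
    ∀ y : ℚ_[3],
      y ^ 3 - (1 + θ + θ ^ 2) * y ^ 2 - (2 * θ + 1) * (1 - θ - q) * y
        - (1 - θ - q) ^ 2 ≠ 0 := by
  rw [one_div] at hq
  have hθ : ‖θ - 1‖ ≤ 3⁻¹ := hq ▸ h2.le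
  have hs : ‖1 - θ - q‖ = 3⁻¹ := by
    rw [show 1 - θ - q = -(q + (θ - 1)) by ring, norm_neg,
      norm_add_eq_max_of_norm_ne_norm h2.ne', max_eq_left h2.le, hq]
  intro y
  apply Padic.cubic_ne_zero_of_norm_coeff_le (p := 3)
  · exact_mod_cast Padic.norm_one_add_self_add_sq_le hθ
  · rw [norm_mul, hs, Nat.cast_ofNat, sq]
    gcongr
    exact Padic.norm_two_mul_add_one_le hθ
  · rw [norm_pow, hs, Nat.cast_ofNat]

/-- In `ℚ_3`, if `0 < ‖θ-1‖ < ‖q‖ < 1` and `‖q‖ = 1/3`, then the fixed-point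
cubic has no root in `ℚ_3`. -/
theorem cubic_no_root_in_Q3 (θ q : ℚ_[3])
    (h1 : 0 < ‖θ - 1‖) (h2 : ‖θ - 1‖ < ‖q‖) (h3 : ‖q‖ < 1) (hq : ‖q‖ = 1 / 3) :
    ∀ y : ℚ_[3],
      y ^ 3 - (1 + θ + θ ^ 2) * y ^ 2 - (2 * θ + 1) * (1 - θ - q) * y
        - (1 - θ - q) ^ 2 ≠ 0 :=
  cubic_no_root_in_Q3_general θ q h2 hq
end

section
/- Let θ, q ∈ ℚ_2 with 0 < |θ−1|_2 < |q|_2 < 1 and let r ∈ ℕ with |q|_2 = 2^(−r). Then the cubic y³ − (1+θ+θ²)y² − (2θ+1)(1−θ−q)y − (1−θ−q)² has no root y ∈ ℚ_2 with |y|_2 = 2^(−r). -/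
/-!
Put `a = 1 - θ - q`; since `‖θ - 1‖ < ‖q‖`, both `a` and `y` have norm `‖q‖ < 1`, so `s = a / y`
is a unit. Then the cubic equals `y ^ 2 * (y - ((1 + θ + θ²) + (θ + θ + 1) s + s²))`, and the
bracketed sum is a sum of three units, hence a unit in `ℤ_[2]` (odd + odd + odd is odd). It
cannot equal `y`, whose norm is `< 1`.
-/

namespace PadicInt

theorem isUnit_iff_toZMod_two_eq_one {x : ℤ_[2]} : IsUnit x ↔ toZMod x = 1 := by
  rw [← (by decide : ∀ r : ZMod 2, r ≠ 0 ↔ r = 1), ne_eq, ← RingHom.mem_ker, ker_toZMod,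
    IsLocalRing.mem_maximalIdeal, mem_nonunits_iff, not_not]

theorem isUnit_add_add_of_two {x y z : ℤ_[2]} (hx : IsUnit x) (hy : IsUnit y) (hz : IsUnit z) :
    IsUnit (x + y + z) := by
  rw [isUnit_iff_toZMod_two_eq_one] at *
  rw [map_add, map_add, hx, hy, hz]
  decide

end PadicInt

namespace Padic

theorem norm_add_add_eq_one_of_two {x y z : ℚ_[2]} (hx : ‖x‖ = 1) (hy : ‖y‖ = 1)
    (hz : ‖z‖ = 1) : ‖x + y + z‖ = 1 :=
  PadicInt.isUnit_iff.mp <| PadicInt.isUnit_add_add_of_two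
    (x := ⟨x, hx.le⟩) (y := ⟨y, hy.le⟩) (z := ⟨z, hz.le⟩)
    (PadicInt.isUnit_iff.mpr hx) (PadicInt.isUnit_iff.mpr hy) (PadicInt.isUnit_iff.mpr hz)

theorem cubic_ne_zero_of_norm_eq {c₁ c₂ a y : ℚ_[2]} (hc₁ : ‖c₁‖ = 1) (hc₂ : ‖c₂‖ = 1)
    (ha : ‖a‖ = ‖y‖) (hy₀ : y ≠ 0) (hy₁ : ‖y‖ < 1) :
    y ^ 3 - c₁ * y ^ 2 - c₂ * a * y - a ^ 2 ≠ 0 := by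
  set s := a / y
  have hs : ‖s‖ = 1 := by rw [norm_div, ha, div_self (norm_ne_zero_iff.mpr hy₀)]
  have hfactor :
      y ^ 3 - c₁ * y ^ 2 - c₂ * a * y - a ^ 2 = y ^ 2 * (y - (c₁ + c₂ * s + s ^ 2)) := by
    simp only [s]
    field_simp
    ring
  have hunit : ‖c₁ + c₂ * s + s ^ 2‖ = 1 :=
    norm_add_add_eq_one_of_two hc₁ (by rw [norm_mul, hc₂, hs, one_mul])
      (by rw [norm_pow, hs, one_pow])
  rw [hfactor]
  refine mul_ne_zero (pow_ne_zero 2 hy₀) (sub_ne_zero.mpr fun h => ?_)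
  rw [h, hunit] at hy₁
  exact lt_irrefl 1 hy₁

end Padic

theorem cubic_no_small_root_in_Q2_general (θ q : ℚ_[2]) (r : ℕ)
    (h2 : ‖θ - 1‖ < ‖q‖) (h3 : ‖q‖ < 1)
    (hq : ‖q‖ = (2 : ℝ) ^ (-(r : ℤ))) :
    ∀ y : ℚ_[2], ‖y‖ = (2 : ℝ) ^ (-(r : ℤ)) →
      y ^ 3 - (1 + θ + θ ^ 2) * y ^ 2 - (2 * θ + 1) * (1 - θ - q) * y
        - (1 - θ - q) ^ 2 ≠ 0 := by
  intro y hy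
  have hθ : ‖θ‖ = 1 := by
    simpa using Padic.norm_eq_of_norm_sub_lt_right (z2 := 1) (by simpa using h2.trans h3)
  have hy₀ : y ≠ 0 := norm_ne_zero_iff.mp (hy ▸ by positivity)
  have ha : ‖1 - θ - q‖ = ‖y‖ := by
    rw [hy, ← hq, ← norm_neg q]
    exact Padic.norm_eq_of_norm_sub_lt_right (by simpa [norm_sub_rev] using h2)
  have hc₁ : ‖1 + θ + θ ^ 2‖ = 1 :=
    Padic.norm_add_add_eq_one_of_two norm_one hθ (by rw [norm_pow, hθ, one_pow])
  have hc₂ : ‖2 * θ + 1‖ = 1 := by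
    simpa [two_mul] using Padic.norm_add_add_eq_one_of_two hθ hθ norm_one
  exact Padic.cubic_ne_zero_of_norm_eq hc₁ hc₂ ha hy₀ (hy.trans hq.symm ▸ h3)

/-- In `ℚ_2`, if `0 < ‖θ-1‖ < ‖q‖ < 1` and `‖q‖ = 2^(-r)`, the fixed-point
cubic has no root of norm `2^(-r)`. -/
theorem cubic_no_small_root_in_Q2 (θ q : ℚ_[2]) (r : ℕ)
    (h1 : 0 < ‖θ - 1‖) (h2 : ‖θ - 1‖ < ‖q‖) (h3 : ‖q‖ < 1)
    (hq : ‖q‖ = (2 : ℝ) ^ (-(r : ℤ))) :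
    ∀ y : ℚ_[2], ‖y‖ = (2 : ℝ) ^ (-(r : ℤ)) →
      y ^ 3 - (1 + θ + θ ^ 2) * y ^ 2 - (2 * θ + 1) * (1 - θ - q) * y
        - (1 - θ - q) ^ 2 ≠ 0 :=
  cubic_no_small_root_in_Q2_general θ q r h2 h3 hq
end

section
/- Let p be a prime, θ, q ∈ ℚ_p with 0 < |θ−1|_p < |q|_p < 1, and suppose y1 ∈ ℚ_p is a root of the fixed point cubic with |y1|_p = 1. Set x∞ = 2−θ−q and x1 = x∞ + (θ−1)y1. Then f(x1) = x1 where f(x) = ((θx+q−1)/(x+θ+q−2))³, |x1 − x∞|_p = |θ−1|_p, and |x1 − 1|_p = |q|_p. -/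
/-- If `y₁` is a unit root of the fixed-point cubic, then
`x₁ = (2 - θ - q) + (θ-1)y₁` is a fixed point of the Potts–Bethe mapping with
`‖x₁ - x∞‖ = ‖θ-1‖` and `‖x₁ - 1‖ = ‖q‖`. -/
theorem pottsBethe_fixed_point_x1 (p : ℕ) [Fact p.Prime]
    (θ q : ℚ_[p]) (h1 : 0 < ‖θ - 1‖) (h2 : ‖θ - 1‖ < ‖q‖) (h3 : ‖q‖ < 1)
    (y1 : ℚ_[p])
    (hy1 : y1 ^ 3 - (1 + θ + θ ^ 2) * y1 ^ 2 - (2 * θ + 1) * (1 - θ - q) * y1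
        - (1 - θ - q) ^ 2 = 0)
    (hy1norm : ‖y1‖ = 1) :
    ((θ * ((2 - θ - q) + (θ - 1) * y1) + q - 1) /
        (((2 - θ - q) + (θ - 1) * y1) + θ + q - 2)) ^ 3
      = (2 - θ - q) + (θ - 1) * y1 ∧
    ‖((2 - θ - q) + (θ - 1) * y1) - (2 - θ - q)‖ = ‖θ - 1‖ ∧
    ‖((2 - θ - q) + (θ - 1) * y1) - 1‖ = ‖q‖ := by
  have hθ : θ - 1 ≠ 0 := by
    intro h; rw [h] at h1; simp at h1
  have hy0 : y1 ≠ 0 := by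
    intro h; rw [h] at hy1norm; simp at hy1norm
  refine ⟨?_, ?_, ?_⟩
  · have hden : ((2 - θ - q) + (θ - 1) * y1) + θ + q - 2 = (θ - 1) * y1 := by ring
    rw [hden, div_pow, div_eq_iff (pow_ne_zero 3 (mul_ne_zero hθ hy0))]
    linear_combination ((θ - 1) ^ 3 * (-(θ - 1) * y1 - (1 - θ - q))) * hy1
  · rw [show (2 - θ - q) + (θ - 1) * y1 - (2 - θ - q) = (θ - 1) * y1 by ring,
      norm_mul, hy1norm, mul_one]
  · rw [show (2 - θ - q) + (θ - 1) * y1 - 1 = -q + (θ - 1) * (y1 - 1) by ring]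
    have hle : ‖(θ - 1) * (y1 - 1)‖ < ‖(-q : ℚ_[p])‖ := by
      rw [norm_neg, norm_mul]
      calc ‖θ - 1‖ * ‖y1 - 1‖ ≤ ‖θ - 1‖ * 1 := by
            apply mul_le_mul_of_nonneg_left _ (norm_nonneg _)
            have := Padic.nonarchimedean y1 (-1)
            simpa [hy1norm, sub_eq_add_neg] using this
        _ < ‖q‖ := by rwa [mul_one]
    calc ‖-q + (θ - 1) * (y1 - 1)‖ = max ‖(-q : ℚ_[p])‖ ‖(θ - 1) * (y1 - 1)‖ := by
          apply Padic.add_eq_max_of_ne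
          exact ne_of_gt hle
      _ = ‖(-q : ℚ_[p])‖ := max_eq_left hle.le
      _ = ‖q‖ := norm_neg q
end

section
/- Let p ≡ 1 (mod 3) be a prime, θ, q ∈ ℚ_p with 0 < |θ−1|_p < |q|_p < 1, f the Potts–Bethe mapping f(x) = ((θx+q−1)/(x+θ+q−2))³, and x∞ = 2−θ−q. Let x1 be a fixed point with |x1 − x∞|_p = |θ−1|_p (i.e. x1 = x∞ + (θ−1)y1 with |y1|_p = 1). Then for all u, v in the ball C₁ = {x : |x − x1|_p < |θ−1|_p}, one has |f(u) − f(v)|_p = (|q|_p/|θ−1|_p)·|u − v|_p. -/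
/-!
Every point of `C₁` lies at distance exactly `|θ - 1|` from the pole `x∞ = 2 - θ - q`, and
`f = g³` with `g x = θ - (θ - 1)(θ + q - 1)/(x - x∞)`. Hence on `C₁` the Möbius map `g` scales
distances by `|(θ - 1)(θ + q - 1)| / |θ - 1|² = |q| / |θ - 1|` and stays within `|q| < 1` of the
unit `θ`. Cubing is an isometry on such a residue disc because `a³ - b³ = (a - b)(a² + ab + b²)`
and `a² + ab + b² ≡ 3θ²` is a unit when `|3| = 1`.
-/

namespace IsUltrametricDist

section Group

variable {G : Type*} [SeminormedAddGroup G] [IsUltrametricDist G]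

theorem norm_eq_of_norm_sub_lt {x y : G} (h : ‖x - y‖ < ‖y‖) : ‖x‖ = ‖y‖ := by
  rw [← sub_add_cancel x y, norm_add_eq_max_of_norm_ne_norm h.ne, max_eq_right h.le]

end Group

section Field

variable {K : Type*} [NormedField K] [IsUltrametricDist K]

theorem norm_sq_add_mul_add_sq_eq_one (h3 : ‖(3 : K)‖ = 1) {a b c : K} (hc : ‖c‖ = 1)
    (ha : ‖a - c‖ < 1) (hb : ‖b - c‖ < 1) : ‖a ^ 2 + a * b + b ^ 2‖ = 1 := by
  set d := a - c
  set e := b - c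
  have hde : ‖d + e‖ < 1 := (norm_add_le_max d e).trans_lt (max_lt ha hb)
  have hlinear : ‖3 * c * (d + e)‖ < 1 := by rwa [norm_mul, norm_mul, h3, hc, one_mul, one_mul]
  have hquadratic : ‖d ^ 2 + e * (d + e)‖ < 1 := by
    refine (norm_add_le_max _ _).trans_lt (max_lt ?_ ?_)
    · rw [norm_pow]; exact pow_lt_one₀ (norm_nonneg d) ha two_ne_zero
    · rw [norm_mul]; exact mul_lt_one_of_nonneg_of_lt_one_left (norm_nonneg e) hb hde.le
  have hlead : ‖3 * c ^ 2‖ = 1 := by rw [norm_mul, norm_pow, h3, hc, one_pow, one_mul]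
  have hexpand :
      a ^ 2 + a * b + b ^ 2 = (3 * c * (d + e) + (d ^ 2 + e * (d + e))) + 3 * c ^ 2 := by
    simp only [d, e]; ring
  have hsmall : ‖3 * c * (d + e) + (d ^ 2 + e * (d + e))‖ < 1 :=
    (norm_add_le_max _ _).trans_lt (max_lt hlinear hquadratic)
  rw [hexpand, norm_eq_of_norm_sub_lt (by rwa [add_sub_cancel_right, hlead]), hlead]

theorem norm_pow_three_sub_pow_three (h3 : ‖(3 : K)‖ = 1) {a b c : K} (hc : ‖c‖ = 1)
    (ha : ‖a - c‖ < 1) (hb : ‖b - c‖ < 1) : ‖a ^ 3 - b ^ 3‖ = ‖a - b‖ := by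
  rw [show a ^ 3 - b ^ 3 = (a - b) * (a ^ 2 + a * b + b ^ 2) by ring, norm_mul,
    norm_sq_add_mul_add_sq_eq_one h3 hc ha hb, mul_one]

end Field

end IsUltrametricDist

theorem norm_div_sub_div_of_norm_sub_eq {K : Type*} [NormedField K] {k x u v : K} {r : ℝ}
    (hu : ‖u - x‖ = r) (hv : ‖v - x‖ = r) (hr : r ≠ 0) :
    ‖k / (u - x) - k / (v - x)‖ = ‖k‖ / r ^ 2 * ‖u - v‖ := by
  have hu0 : u - x ≠ 0 := norm_ne_zero_iff.mp (hu ▸ hr)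
  have hv0 : v - x ≠ 0 := norm_ne_zero_iff.mp (hv ▸ hr)
  rw [div_sub_div _ _ hu0 hv0, show k * (v - x) - (u - x) * k = -(k * (u - v)) by ring,
    norm_div, norm_neg, norm_mul, norm_mul, hu, hv]
  ring

theorem Padic.norm_three_eq_one {p : ℕ} [hp : Fact p.Prime] (h3 : p ≠ 3) :
    ‖(3 : ℚ_[p])‖ = 1 := by
  exact_mod_cast
    Padic.norm_natCast_eq_one_iff.mpr ((Nat.coprime_primes hp.out Nat.prime_three).mpr h3)

theorem pottsBethe_fraction_eq {K : Type*} [Field K] {θ q w : K} (hw : w - (2 - θ - q) ≠ 0) :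
    (θ * w + q - 1) / (w + θ + q - 2) = θ - (θ - 1) * (θ + q - 1) / (w - (2 - θ - q)) := by
  rw [show w + θ + q - 2 = w - (2 - θ - q) by ring]
  field_simp
  ring

open IsUltrametricDist

theorem pottsBethe_scaling_on_C1_general (p : ℕ) [Fact p.Prime] (hp : p % 3 = 1)
    (θ q : ℚ_[p]) (h1 : 0 < ‖θ - 1‖) (h2 : ‖θ - 1‖ < ‖q‖) (h3 : ‖q‖ < 1)
    (y1 x1 : ℚ_[p]) (hy1 : ‖y1‖ = 1) (hx1 : x1 = (2 - θ - q) + (θ - 1) * y1) :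
    ∀ u v : ℚ_[p], ‖u - x1‖ < ‖θ - 1‖ → ‖v - x1‖ < ‖θ - 1‖ →
      ‖((θ * u + q - 1) / (u + θ + q - 2)) ^ 3
          - ((θ * v + q - 1) / (v + θ + q - 2)) ^ 3‖
        = ‖q‖ / ‖θ - 1‖ * ‖u - v‖ := by
  intro u v hu hv
  have hθ : ‖θ‖ = 1 := by
    simpa using norm_eq_of_norm_sub_lt (x := θ) (y := 1) (by simpa using h2.trans h3)
  have hk : ‖(θ - 1) * (θ + q - 1)‖ = ‖θ - 1‖ * ‖q‖ := by
    rw [norm_mul,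
      norm_eq_of_norm_sub_lt (x := θ + q - 1) (by rwa [show θ + q - 1 - q = θ - 1 by ring])]
  have hx1_dist : ‖x1 - (2 - θ - q)‖ = ‖θ - 1‖ := by
    rw [hx1, add_sub_cancel_left, norm_mul, hy1, mul_one]
  have hC1_dist {w : ℚ_[p]} (hw : ‖w - x1‖ < ‖θ - 1‖) : ‖w - (2 - θ - q)‖ = ‖θ - 1‖ :=
    hx1_dist ▸ norm_eq_of_norm_sub_lt (by rwa [sub_sub_sub_cancel_right, hx1_dist])
  have hC1_ne {w : ℚ_[p]} (hw : ‖w - x1‖ < ‖θ - 1‖) : w - (2 - θ - q) ≠ 0 :=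
    norm_ne_zero_iff.mp ((hC1_dist hw).trans_ne h1.ne')
  have hC1_near {w : ℚ_[p]} (hw : ‖w - x1‖ < ‖θ - 1‖) :
      ‖(θ * w + q - 1) / (w + θ + q - 2) - θ‖ < 1 := by
    rwa [pottsBethe_fraction_eq (hC1_ne hw), sub_sub_cancel_left, norm_neg, norm_div, hk,
      hC1_dist hw, mul_div_cancel_left₀ _ h1.ne']
  rw [norm_pow_three_sub_pow_three (Padic.norm_three_eq_one (by omega)) hθ (hC1_near hu)
      (hC1_near hv), pottsBethe_fraction_eq (hC1_ne hu), pottsBethe_fraction_eq (hC1_ne hv),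
    sub_sub_sub_cancel_left, norm_div_sub_div_of_norm_sub_eq (hC1_dist hv) (hC1_dist hu) h1.ne',
    hk, norm_sub_rev v u]
  field_simp

/-- For `p ≡ 1 (mod 3)`, on the ball `C₁ = {x : ‖x - x₁‖ < ‖θ-1‖}` around the
repelling fixed point `x₁ = x∞ + (θ-1)y₁` (with `‖y₁‖ = 1`), the Potts–Bethe
mapping is a local scaling with factor `‖q‖/‖θ-1‖`. -/
theorem pottsBethe_scaling_on_C1 (p : ℕ) [Fact p.Prime] (hp : p % 3 = 1)
    (θ q : ℚ_[p]) (h1 : 0 < ‖θ - 1‖) (h2 : ‖θ - 1‖ < ‖q‖) (h3 : ‖q‖ < 1)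
    (y1 x1 : ℚ_[p]) (hy1 : ‖y1‖ = 1) (hx1 : x1 = (2 - θ - q) + (θ - 1) * y1)
    (hfix : ((θ * x1 + q - 1) / (x1 + θ + q - 2)) ^ 3 = x1) :
    ∀ u v : ℚ_[p], ‖u - x1‖ < ‖θ - 1‖ → ‖v - x1‖ < ‖θ - 1‖ →
      ‖((θ * u + q - 1) / (u + θ + q - 2)) ^ 3
          - ((θ * v + q - 1) / (v + θ + q - 2)) ^ 3‖
        = ‖q‖ / ‖θ - 1‖ * ‖u - v‖ :=
  pottsBethe_scaling_on_C1_general p hp θ q h1 h2 h3 y1 x1 hy1 hx1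
end

section
/- Let θ, q ∈ ℚ_3 with 0 < |θ−1|_3 < |q|_3 ≤ 1/9. Then the cubic h(y) = y³ − (1+θ+θ²)y² − (2θ+1)(1−θ−q)y − (1−θ−q)² has a root y ∈ ℤ_3 with |y|_3 = 1/3 and |y − 3|_3 < 1/3. -/
/-!
Write `θ = 1 + 27t` and `q = 9s` with `s, t ∈ ℤ_3`, which the hypotheses allow since the norm is
discrete. Substituting `y = 3 + 9u` turns the cubic into `81 · G(u)`, where `G ∈ ℤ_3[u]` satisfies
`G(u) ≡ u + s - s²` and `G'(u) ≡ 1 (mod 3)`. So `s² - s` is a simple root of `G` modulo `3`, which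
Hensel's lemma lifts to a root `u ∈ ℤ_3`; then `y = 3 + 9u` has `‖y - 3‖ ≤ 1/9`.
-/

open Polynomial

namespace PadicInt

variable {p : ℕ} [Fact p.Prime]

@[simp, norm_cast]
theorem coe_ofNat (n : ℕ) [n.AtLeastTwo] : ((ofNat(n) : ℤ_[p]) : ℚ_[p]) = ofNat(n) := rfl

theorem toZMod_eq_zero_iff_norm_lt_one {x : ℤ_[p]} : toZMod x = 0 ↔ ‖x‖ < 1 := by
  rw [← RingHom.mem_ker, ker_toZMod, IsLocalRing.mem_maximalIdeal, mem_nonunits]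

theorem toZMod_ne_zero_iff_norm_eq_one {x : ℤ_[p]} : toZMod x ≠ 0 ↔ ‖x‖ = 1 := by
  rw [Ne, toZMod_eq_zero_iff_norm_lt_one, not_lt]
  exact ⟨(norm_le_one x).antisymm, ge_of_eq⟩

theorem exists_isRoot_of_toZMod_eval_eq_zero {F : ℤ_[p][X]} {a : ℤ_[p]}
    (ha : toZMod (F.eval a) = 0) (ha' : toZMod (F.derivative.eval a) ≠ 0) :
    ∃ z, F.IsRoot z := by
  rw [toZMod_eq_zero_iff_norm_lt_one] at ha
  rw [toZMod_ne_zero_iff_norm_eq_one] at ha'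
  obtain ⟨z, hz, -⟩ := hensels_lemma (F := F) (a := a) (by simpa [ha'] using ha)
  exact ⟨z, by simpa using hz⟩

end PadicInt

theorem Padic.exists_eq_mul_of_norm_le {p : ℕ} [Fact p.Prime] {x c : ℚ_[p]} (hc : c ≠ 0)
    (hx : ‖x‖ ≤ ‖c‖) : ∃ z : ℤ_[p], x = c * z :=
  ⟨⟨x / c, by rwa [norm_div, div_le_one (norm_pos_iff.2 hc)]⟩, (mul_div_cancel₀ x hc).symm⟩

theorem Padic.norm_three_s19 : ‖(3 : ℚ_[3])‖ = 1 / 3 := by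
  simpa using Padic.norm_p (p := 3)

noncomputable def reducedCubic (s t : ℤ_[3]) : ℤ_[3][X] :=
  X * (1 + 3 * X) ^ 2 - C (9 * t * (1 + 9 * t)) * (1 + 3 * X) ^ 2
    + C ((1 + 18 * t) * (s + 3 * t)) * (1 + 3 * X) - C ((s + 3 * t) ^ 2)

theorem cubic_eq_mul_eval_reducedCubic {θ q : ℚ_[3]} {s t : ℤ_[3]} (hθ : θ - 1 = 3 ^ 3 * t)
    (hq : q = 3 ^ 2 * s) (z : ℤ_[3]) :
    (3 + 3 ^ 2 * z) ^ 3 - (1 + θ + θ ^ 2) * (3 + 3 ^ 2 * z) ^ 2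
        - (2 * θ + 1) * (1 - θ - q) * (3 + 3 ^ 2 * z) - (1 - θ - q) ^ 2
      = 3 ^ 4 * ((reducedCubic s t).eval z : ℤ_[3]) := by
  obtain rfl : θ = 1 + 3 ^ 3 * t := by linear_combination hθ
  subst hq
  simp only [reducedCubic, eval_sub, eval_add, eval_mul, eval_pow, eval_C, eval_X, eval_one,
    eval_ofNat]
  push_cast
  ring

theorem toZMod_eval_reducedCubic (s t : ℤ_[3]) :
    PadicInt.toZMod ((reducedCubic s t).eval (s ^ 2 - s)) = 0 := by
  simp only [reducedCubic, eval_sub, eval_add, eval_mul, eval_pow, eval_C, eval_X, eval_one,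
    eval_ofNat, map_sub, map_add, map_mul, map_pow, map_one, map_ofNat]
  ring_nf
  reduce_mod_char

theorem toZMod_eval_derivative_reducedCubic (s t u : ℤ_[3]) :
    PadicInt.toZMod ((reducedCubic s t).derivative.eval u) = 1 := by
  simp only [reducedCubic, derivative_mul, derivative_X,
    derivative_C, derivative_pow, derivative_one, derivative_ofNat, eval_sub, eval_add, eval_mul,
    eval_pow, eval_C, eval_X, eval_one, eval_ofNat, eval_natCast, eval_zero, map_sub, map_add,
    map_mul, map_pow, map_one, map_ofNat, map_natCast, map_zero]
  reduce_mod_char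

theorem cubic_root_in_Q3_general (θ q : ℚ_[3])
    (h2 : ‖θ - 1‖ < ‖q‖) (h3 : ‖q‖ ≤ 1 / 9) :
    ∃ y : ℚ_[3],
      y ^ 3 - (1 + θ + θ ^ 2) * y ^ 2 - (2 * θ + 1) * (1 - θ - q) * y
        - (1 - θ - q) ^ 2 = 0 ∧ ‖y‖ = 1 / 3 ∧ ‖y - 3‖ < 1 / 3 := by
  have hθ : ‖θ - 1‖ ≤ 1 / 27 := by
    have := (Padic.norm_le_pow_iff_norm_lt_pow_add_one (θ - 1) (-3)).2 (by norm_num; linarith)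
    norm_num at this ⊢
    exact this
  obtain ⟨s, hs⟩ : ∃ s : ℤ_[3], q = 3 ^ 2 * s :=
    Padic.exists_eq_mul_of_norm_le (by norm_num) (by rw [norm_pow, Padic.norm_three_s19]; linarith)
  obtain ⟨t, ht⟩ : ∃ t : ℤ_[3], θ - 1 = 3 ^ 3 * t :=
    Padic.exists_eq_mul_of_norm_le (by norm_num) (by rw [norm_pow, Padic.norm_three_s19]; linarith)
  obtain ⟨z, hz⟩ := PadicInt.exists_isRoot_of_toZMod_eval_eq_zero (toZMod_eval_reducedCubic s t)
    (by simp [toZMod_eval_derivative_reducedCubic])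
  have hy : ‖(3 + 3 ^ 2 * z : ℚ_[3]) - 3‖ < 1 / 3 := by
    rw [add_sub_cancel_left, norm_mul, norm_pow, Padic.norm_three_s19]
    have hz1 : ‖(z : ℚ_[3])‖ ≤ 1 := z.property
    nlinarith
  refine ⟨3 + 3 ^ 2 * z, ?_, ?_, hy⟩
  · rw [cubic_eq_mul_eval_reducedCubic ht hs, hz.eq_zero, PadicInt.coe_zero, mul_zero]
  · rw [Padic.norm_eq_of_norm_sub_lt_right (by rwa [Padic.norm_three_s19]), Padic.norm_three_s19]

/-- In `ℚ_3`, if `0 < ‖θ-1‖ < ‖q‖ ≤ 1/9`, the fixed-point cubic has a root `y`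
with `‖y‖ = 1/3` and `‖y - 3‖ < 1/3` (in particular `y ∈ ℤ_3`). -/
theorem cubic_root_in_Q3 (θ q : ℚ_[3])
    (h1 : 0 < ‖θ - 1‖) (h2 : ‖θ - 1‖ < ‖q‖) (h3 : ‖q‖ ≤ 1 / 9) :
    ∃ y : ℚ_[3],
      y ^ 3 - (1 + θ + θ ^ 2) * y ^ 2 - (2 * θ + 1) * (1 - θ - q) * y
        - (1 - θ - q) ^ 2 = 0 ∧ ‖y‖ = 1 / 3 ∧ ‖y - 3‖ < 1 / 3 :=
  cubic_root_in_Q3_general θ q h2 h3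
end
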